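/- Let n ≥ 2 be an even integer and let x_1, …, x_n be positive integers. For every path c in the hour-glass structure built from x_1, …, x_n, the sum of the path equals ∑_{i ∈ S'} x_i, where S' = { i ∈ {1, …, n} : c_{2i−1} = n−1 }. In particular, if some path has sum t, then some subset of {x_1, …, x_n} sums to t. -/

import Mathlib

/-- A cell `(r, c)` of the hour-glass structure (with parameter `n`) is valid if
`c ≡ r (mod 2)` and `|c - n| ≤ |r - n|`. -/
def HGValid (n r : ℕ) (c : ℤ) : Prop :=
  c % 2 = (r : ℤ) % 2 ∧ |c - (n : ℤ)| ≤ |(r : ℤ) - (n : ℤ)|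

/-- The value of the cell `(r, c)`: it is `x i` when `r = 2*i - 1` for some
`i ∈ {1, …, n}` (i.e. `r` is odd, `1 ≤ r ≤ 2n-1`, and `i = (r+1)/2`) and `c = n - 1`;
otherwise it is `0`. -/
def hgValue (n : ℕ) (x : ℕ → ℕ) (r : ℕ) (c : ℤ) : ℕ :=
  if r % 2 = 1 ∧ 1 ≤ r ∧ r ≤ 2 * n - 1 ∧ c = (n : ℤ) - 1 then x ((r + 1) / 2) else 0

/-- A path assigns to every row `r ∈ {1, …, 2n-1}` a column `c r` such that each
cell `(r, c r)` is valid and consecutive columns differ by exactly `1`. -/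
def IsHGPath (n : ℕ) (c : ℕ → ℤ) : Prop :=
  (∀ r, 1 ≤ r → r ≤ 2 * n - 1 → HGValid n r (c r)) ∧
  (∀ r, 1 ≤ r → r < 2 * n - 1 → |c (r + 1) - c r| = 1)

/-- The sum of the values along a path. -/
def hgSum (n : ℕ) (x : ℕ → ℕ) (c : ℕ → ℤ) : ℕ :=
  ∑ r ∈ Finset.Icc 1 (2 * n - 1), hgValue n x r (c r)

theorem Finset.sum_Icc_odd_eq_sum_Icc {M : Type*} [AddCommMonoid M] (n : ℕ) (f : ℕ → M)
    (hf : ∀ r, r % 2 = 0 → f r = 0) :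
    ∑ r ∈ Finset.Icc 1 (2 * n - 1), f r = ∑ i ∈ Finset.Icc 1 n, f (2 * i - 1) := by
  have hinj : Set.InjOn (fun i => 2 * i - 1) (Finset.Icc 1 n : Set ℕ) := by
    intro i hi j hj hij
    simp only [Finset.coe_Icc, Set.mem_Icc] at hi hj
    simp only at hij
    omega
  rw [← Finset.sum_image hinj]
  refine (Finset.sum_subset ?_ ?_).symm
  · intro r hr
    simp only [Finset.mem_image, Finset.mem_Icc] at hr ⊢
    omega
  · intro r hr hr_notin_image
    refine hf r ?_
    simp only [Finset.mem_image, Finset.mem_Icc, not_exists, not_and] at hr hr_notin_image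
    by_contra hodd
    exact hr_notin_image ((r + 1) / 2) (by omega) (by omega)

theorem hgValue_of_mod_two_eq_zero (n : ℕ) (x : ℕ → ℕ) (c : ℤ) {r : ℕ} (hr : r % 2 = 0) :
    hgValue n x r c = 0 :=
  if_neg fun h => by omega

theorem hgValue_two_mul_sub_one (n : ℕ) (x : ℕ → ℕ) (c : ℤ) {i : ℕ} (hi : i ∈ Finset.Icc 1 n) :
    hgValue n x (2 * i - 1) c = if c = (n : ℤ) - 1 then x i else 0 := by
  rw [Finset.mem_Icc] at hi
  have hrow : (2 * i - 1) % 2 = 1 ∧ 1 ≤ 2 * i - 1 ∧ 2 * i - 1 ≤ 2 * n - 1 := by omega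
  have hindex : (2 * i - 1 + 1) / 2 = i := by omega
  simp only [hgValue, hrow, hindex, true_and]

theorem hgSum_eq_sum_filter (n : ℕ) (x : ℕ → ℕ) (c : ℕ → ℤ) :
    hgSum n x c =
      ∑ i ∈ (Finset.Icc 1 n).filter (fun i => c (2 * i - 1) = (n : ℤ) - 1), x i := by
  rw [hgSum, Finset.sum_Icc_odd_eq_sum_Icc n _ fun r hr => hgValue_of_mod_two_eq_zero n x _ hr,
    Finset.sum_filter]
  exact Finset.sum_congr rfl fun i hi => hgValue_two_mul_sub_one n x _ hi

theorem hourglass_path_sum_eq_subset_sum_general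
    (n : ℕ)
    (x : ℕ → ℕ) :
    (∀ c : ℕ → ℤ, IsHGPath n c →
        hgSum n x c =
          ∑ i ∈ (Finset.Icc 1 n).filter (fun i => c (2 * i - 1) = (n : ℤ) - 1), x i) ∧
    (∀ t : ℕ, (∃ c : ℕ → ℤ, IsHGPath n c ∧ hgSum n x c = t) →
        ∃ S' ⊆ Finset.Icc 1 n, ∑ i ∈ S', x i = t) := by
  refine ⟨fun c _ => hgSum_eq_sum_filter n x c, ?_⟩
  rintro t ⟨c, -, rfl⟩
  exact ⟨_, Finset.filter_subset _ _, (hgSum_eq_sum_filter n x c).symm⟩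

/-- Every path in the hour-glass structure has sum
`∑_{i ∈ S'} x i` where `S' = { i ∈ {1, …, n} : c (2i-1) = n-1 }`; in particular,
if some path has sum `t` then some subset of `{1, …, n}` has `x`-sum `t`. -/
theorem hourglass_path_sum_eq_subset_sum
    (n : ℕ) (hn : 2 ≤ n) (hneven : Even n)
    (x : ℕ → ℕ) (hx : ∀ i, 1 ≤ i → i ≤ n → 0 < x i) :
    (∀ c : ℕ → ℤ, IsHGPath n c →
        hgSum n x c =
          ∑ i ∈ (Finset.Icc 1 n).filter (fun i => c (2 * i - 1) = (n : ℤ) - 1), x i) ∧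
    (∀ t : ℕ, (∃ c : ℕ → ℤ, IsHGPath n c ∧ hgSum n x c = t) →
        ∃ S' ⊆ Finset.Icc 1 n, ∑ i ∈ S', x i = t) :=
  hourglass_path_sum_eq_subset_sum_general n x
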